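/- arXiv:2306.06016 — 3 statements merged into one kernel-verified Lean document; each statement's English description precedes it below -/
import Mathlib

section
/- Convergence of initial data implies convergence of orbits but not conversely: (a) if xₙ → x in H then e^{·A} xₙ → e^{·A} x in L²(0,T;H) for any finite T; (b) there exist a Hilbert space H, a C₀-semigroup e^{tA} on H, T > 0, and a sequence (xₙ) in H with e^{·A} xₙ → 0 in L²(0,T;H) but xₙ not converging to 0 in H. -/
/-!
(a) By the uniform boundedness principle a strongly continuous family of operators is bounded,
say by `C`, on the compact interval `[0, T]`, so the `L²(0, T; H)` distance between the orbits of
`xₙ` and `x` is at most `√T · C · ‖xₙ - x‖`.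

(b) On `ℓ²(ℕ)` take the diagonal semigroup `e^{tA} eₖ = e^{-kt} eₖ`. The unit vectors `eₙ` do not
tend to `0`, but their orbits `t ↦ e^{-nt} eₙ` have `L²(0, ∞)` norm `(2n)^{-1/2}`.
-/

open MeasureTheory Filter Topology ENNReal Set
open scoped lp

section OrbitConvergence

variable {𝕜 E F X : Type*} [NontriviallyNormedField 𝕜]
  [NormedAddCommGroup E] [NormedSpace 𝕜 E] [NormedAddCommGroup F] [NormedSpace 𝕜 F]

theorem IsCompact.exists_forall_opNorm_le [TopologicalSpace X] [CompleteSpace E] {K : Set X}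
    (hK : IsCompact K) {S : X → E →L[𝕜] F} (hS : ∀ v, ContinuousOn (fun t => S t v) K) :
    ∃ C, ∀ t ∈ K, ‖S t‖ ≤ C := by
  obtain ⟨C, hC⟩ := banach_steinhaus (g := fun t : K => S t) fun v => by
    obtain ⟨C, hC⟩ := hK.exists_bound_of_continuousOn (hS v)
    exact ⟨C, fun t => hC t t.2⟩
  exact ⟨C, fun t ht => hC ⟨t, ht⟩⟩

variable [MeasurableSpace X] {μ : Measure X}

theorem tendsto_eLpNorm_restrict_apply_sub_apply {s : Set X} (hs : MeasurableSet s)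
    (hμs : μ s ≠ ∞) {S : X → E →L[𝕜] F} {C : ℝ} (hC : ∀ t ∈ s, ‖S t‖ ≤ C) (p : ℝ≥0∞)
    {x : ℕ → E} {y : E} (hx : Tendsto x atTop (𝓝 y)) :
    Tendsto (fun n => eLpNorm (fun t => S t (x n) - S t y) p (μ.restrict s)) atTop (𝓝 0) := by
  have hbound : ∀ n, eLpNorm (fun t => S t (x n) - S t y) p (μ.restrict s) ≤
      μ s ^ p.toReal⁻¹ * ENNReal.ofReal (C * ‖x n - y‖) := fun n => by
    simpa using eLpNorm_le_of_ae_bound (p := p) (μ := μ.restrict s) <|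
      (ae_restrict_of_forall_mem hs) fun t ht => by
        rw [← map_sub]
        exact (S t).le_of_opNorm_le (hC t ht) _
  have hlim : Tendsto (fun n => μ s ^ p.toReal⁻¹ * ENNReal.ofReal (C * ‖x n - y‖)) atTop
      (𝓝 0) := by
    have := (tendsto_iff_norm_sub_tendsto_zero.mp hx).const_mul C
    rw [mul_zero] at this
    simpa using ENNReal.Tendsto.const_mul (ENNReal.tendsto_ofReal this)
      (Or.inr (ENNReal.rpow_ne_top_of_nonneg (by positivity) hμs))
  exact tendsto_of_tendsto_of_tendsto_of_le_of_le tendsto_const_nhds hlim (fun _ => zero_le)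
    hbound

end OrbitConvergence

namespace lp

variable {ι 𝕜 : Type*} [NormedField 𝕜] {E : ι → Type*} [∀ i, NormedAddCommGroup (E i)]
  [∀ i, NormedSpace 𝕜 (E i)] {p : ℝ≥0∞}

theorem memℓp_smul_of_norm_le_one (m : ι → 𝕜) (hm : ∀ i, ‖m i‖ ≤ 1) (f : lp E p) :
    Memℓp (fun i => m i • f i) p :=
  (lp.memℓp f).mono' fun i =>
    (norm_smul_le _ _).trans (mul_le_of_le_one_left (norm_nonneg _) (hm i))

variable [Fact (1 ≤ p)]

noncomputable def diagonal (m : ι → 𝕜) (hm : ∀ i, ‖m i‖ ≤ 1) : lp E p →L[𝕜] lp E p :=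
  LinearMap.mkContinuous
    { toFun f := ⟨fun i => m i • f i, memℓp_smul_of_norm_le_one m hm f⟩
      map_add' f g := lp.ext <| funext fun i => smul_add (m i) (f i) (g i)
      map_smul' c f := lp.ext <| funext fun i => smul_comm (m i) c (f i) } 1
    fun f => by
      rw [one_mul]
      exact lp.norm_mono (zero_lt_one.trans_le Fact.out).ne' fun i =>
        (norm_smul_le _ _).trans (mul_le_of_le_one_left (norm_nonneg _) (hm i))

@[simp]
theorem diagonal_apply (m : ι → 𝕜) (hm : ∀ i, ‖m i‖ ≤ 1) (f : lp E p) (i : ι) :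
    diagonal m hm f i = m i • f i := rfl

theorem diagonal_single [DecidableEq ι] (m : ι → 𝕜) (hm : ∀ i, ‖m i‖ ≤ 1) (i : ι) (a : E i) :
    diagonal m hm (lp.single p i a) = lp.single p i (m i • a) := by
  ext j
  by_cases h : j = i
  · subst h; simp
  · simp [Pi.single_eq_of_ne h]

theorem tendsto_diagonal_apply (hp : p ≠ ∞) {α : Type*} {l : Filter α} {m : α → ι → 𝕜}
    (hm : ∀ a i, ‖m a i‖ ≤ 1) {m₀ : ι → 𝕜} (hm₀ : ∀ i, ‖m₀ i‖ ≤ 1)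
    (hlim : ∀ i, Tendsto (m · i) l (𝓝 (m₀ i))) (f : lp E p) :
    Tendsto (fun a => diagonal (m a) (hm a) f) l (𝓝 (diagonal m₀ hm₀ f)) := by
  have hq : 0 < p.toReal := ENNReal.toReal_pos (zero_lt_one.trans_le Fact.out).ne' hp
  have hsum : Tendsto (fun a => ∑' i, ‖(m a i - m₀ i) • f i‖ ^ p.toReal) l
      (𝓝 (∑' _ : ι, (0 : ℝ))) := by
    refine tendsto_tsum_of_dominated_convergence
      (((lp.memℓp f).summable hq).mul_left (2 ^ p.toReal)) (fun i => ?_)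
      (Eventually.of_forall fun a i => ?_)
    · simpa [Real.zero_rpow hq.ne'] using
        (((hlim i).sub_const (m₀ i)).smul_const (f i)).norm.rpow_const (Or.inr hq.le)
    · rw [Real.norm_of_nonneg (by positivity), ← Real.mul_rpow zero_le_two (norm_nonneg _)]
      gcongr
      calc ‖(m a i - m₀ i) • f i‖ ≤ (‖m a i‖ + ‖m₀ i‖) * ‖f i‖ :=
            (norm_smul_le _ _).trans (by gcongr; exact norm_sub_le _ _)
        _ ≤ 2 * ‖f i‖ := by gcongr; linarith [hm a i, hm₀ i]
  have hnorm : ∀ a, ‖diagonal (m a) (hm a) f - diagonal m₀ hm₀ f‖ =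
      (∑' i, ‖(m a i - m₀ i) • f i‖ ^ p.toReal) ^ p.toReal⁻¹ := fun a => by
    rw [lp.norm_eq_tsum_rpow hq, one_div]
    congr 1
    refine tsum_congr fun i => ?_
    simp [sub_smul]
  rw [tendsto_iff_norm_sub_tendsto_zero]
  simp_rw [hnorm]
  simpa [Real.zero_rpow (inv_ne_zero hq.ne')] using
    hsum.rpow_const (p := p.toReal⁻¹) (Or.inr (by positivity))

end lp

theorem eLpNorm_two_exp_neg_mul_Ioi {a : ℝ} (ha : 0 < a) :
    eLpNorm (fun t => Real.exp (-(a * t))) 2 (volume.restrict (Ioi 0)) =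
      ENNReal.ofReal (2 * a)⁻¹ ^ (2⁻¹ : ℝ) := by
  have hsq : ∀ t, ‖Real.exp (-(a * t))‖ₑ ^ (2 : ℝ) = ENNReal.ofReal (Real.exp (-(2 * a) * t)) :=
    fun t => by
      rw [Real.enorm_of_nonneg (Real.exp_pos _).le,
        ENNReal.ofReal_rpow_of_nonneg (Real.exp_pos _).le zero_le_two, ← Real.exp_mul]
      ring_nf
  rw [eLpNorm_eq_lintegral_rpow_enorm_toReal two_ne_zero ofNat_ne_top, ENNReal.toReal_ofNat,
    one_div]
  congr 1
  simp_rw [hsq]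
  rw [← ofReal_integral_eq_lintegral_ofReal (integrableOn_exp_mul_Ioi (by linarith) 0)
    (ae_of_all _ fun _ => (Real.exp_pos _).le), integral_exp_mul_Ioi (by linarith)]
  congr 1
  field_simp
  simp

noncomputable def diagonalExpSemigroup (t : ℝ) : ℓ²(ℕ, ℝ) →L[ℝ] ℓ²(ℕ, ℝ) :=
  lp.diagonal (fun k : ℕ => Real.exp (-(k * max t 0))) fun k => by
    rw [Real.norm_of_nonneg (Real.exp_pos _).le, Real.exp_le_one_iff, neg_nonpos]
    positivity

theorem diagonalExpSemigroup_zero : diagonalExpSemigroup 0 = 1 := by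
  ext f k
  simp [diagonalExpSemigroup]

theorem diagonalExpSemigroup_add {s t : ℝ} (hs : 0 ≤ s) (ht : 0 ≤ t) :
    diagonalExpSemigroup (s + t) = (diagonalExpSemigroup s).comp (diagonalExpSemigroup t) := by
  ext f k
  simp only [diagonalExpSemigroup, ContinuousLinearMap.comp_apply, lp.diagonal_apply, smul_smul,
    ← Real.exp_add, max_eq_left hs, max_eq_left ht, max_eq_left (add_nonneg hs ht)]
  ring_nf

theorem continuous_diagonalExpSemigroup_apply (v : ℓ²(ℕ, ℝ)) :
    Continuous fun t => diagonalExpSemigroup t v :=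
  continuous_iff_continuousAt.mpr fun t₀ =>
    lp.tendsto_diagonal_apply (E := fun _ : ℕ => ℝ) ofNat_ne_top _ _
      (fun k => (by fun_prop : Continuous fun t : ℝ => Real.exp (-(k * max t 0))).tendsto t₀) v

theorem norm_diagonalExpSemigroup_single {t : ℝ} (ht : 0 ≤ t) (n : ℕ) :
    ‖diagonalExpSemigroup t (lp.single 2 n 1)‖ = Real.exp (-(n * t)) := by
  rw [diagonalExpSemigroup, lp.diagonal_single, lp.norm_single two_pos, max_eq_left ht,
    smul_eq_mul, mul_one, Real.norm_of_nonneg (Real.exp_pos _).le]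

theorem tendsto_eLpNorm_diagonalExpSemigroup_single :
    Tendsto (fun n : ℕ => eLpNorm (fun t => diagonalExpSemigroup t (lp.single 2 n 1)) 2
      (volume.restrict (Ioi 0))) atTop (𝓝 0) := by
  have hbound : ∀ n : ℕ, 0 < n →
      eLpNorm (fun t => diagonalExpSemigroup t (lp.single 2 n 1)) 2 (volume.restrict (Ioi 0)) =
        ENNReal.ofReal (2 * n)⁻¹ ^ (2⁻¹ : ℝ) := fun n hn => by
    rw [← eLpNorm_two_exp_neg_mul_Ioi (Nat.cast_pos.mpr hn)]
    refine eLpNorm_congr_norm_ae (ae_restrict_of_forall_mem measurableSet_Ioi fun t ht => ?_)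
    rw [norm_diagonalExpSemigroup_single ht.le, Real.norm_of_nonneg (Real.exp_pos _).le]
  have hlim : Tendsto (fun n : ℕ => ENNReal.ofReal (2 * n)⁻¹ ^ (2⁻¹ : ℝ)) atTop (𝓝 0) := by
    have h := ENNReal.tendsto_ofReal <|
      tendsto_inv_atTop_zero.comp (tendsto_natCast_atTop_atTop.const_mul_atTop (two_pos (α := ℝ)))
    rw [ENNReal.ofReal_zero] at h
    have h' := ((ENNReal.continuous_rpow_const (y := 2⁻¹)).tendsto 0).comp h
    rwa [ENNReal.zero_rpow_of_pos (by norm_num)] at h'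
  exact hlim.congr' (eventually_gt_atTop 0 |>.mono fun n hn => (hbound n hn).symm)

/-- (a) If `xₙ → x` in `H` then the orbits `e^{·A}xₙ` converge to `e^{·A}x`
in `L²(0,T;H)`; (b) but the converse fails: there is a Hilbert space, a C₀-semigroup and a
sequence of initial data whose orbits tend to `0` in `L²(0,T;H)` while the data do not tend
to `0` in `H`. -/
theorem stmt5 :
    -- (a)
    (∀ (H : Type) [NormedAddCommGroup H] [InnerProductSpace ℝ H] [CompleteSpace H]
      (S : ℝ → H →L[ℝ] H),
      S 0 = 1 →
      (∀ s t : ℝ, 0 ≤ s → 0 ≤ t → S (s + t) = (S s).comp (S t)) →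
      (∀ v : H, ContinuousOn (fun t => S t v) (Set.Ici (0 : ℝ))) →
      ∀ (T : ℝ), 0 < T →
      ∀ (x : ℕ → H) (xlim : H), Tendsto x atTop (nhds xlim) →
        Tendsto
          (fun n => MeasureTheory.eLpNorm (fun t => S t (x n) - S t xlim) 2
            ((volume : Measure ℝ).restrict (Set.Ioc 0 T)))
          atTop (nhds 0)) ∧
    -- (b)
    (∃ (H : Type) (_ : NormedAddCommGroup H) (_ : InnerProductSpace ℝ H)
      (_ : CompleteSpace H) (S : ℝ → H →L[ℝ] H) (T : ℝ) (x : ℕ → H),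
      0 < T ∧
      S 0 = 1 ∧
      (∀ s t : ℝ, 0 ≤ s → 0 ≤ t → S (s + t) = (S s).comp (S t)) ∧
      (∀ v : H, ContinuousOn (fun t => S t v) (Set.Ici (0 : ℝ))) ∧
      Tendsto
        (fun n => MeasureTheory.eLpNorm (fun t => S t (x n)) 2
          ((volume : Measure ℝ).restrict (Set.Ioc 0 T)))
        atTop (nhds 0) ∧
      ¬ Tendsto x atTop (nhds 0)) := by
  refine ⟨fun H _ _ _ S _ _ hS T _ x xlim hx => ?_, ?_⟩
  · obtain ⟨C, hC⟩ := isCompact_Icc.exists_forall_opNorm_le fun v =>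
      (hS v).mono (Icc_subset_Ici_self : Icc 0 T ⊆ Ici 0)
    exact tendsto_eLpNorm_restrict_apply_sub_apply measurableSet_Ioc measure_Ioc_lt_top.ne
      (fun t ht => hC t (Ioc_subset_Icc_self ht)) 2 hx
  refine ⟨ℓ²(ℕ, ℝ), inferInstance, inferInstance, inferInstance, diagonalExpSemigroup, 1,
    fun n => lp.single 2 n 1, one_pos, diagonalExpSemigroup_zero,
    fun _ _ => diagonalExpSemigroup_add,
    fun v => (continuous_diagonalExpSemigroup_apply v).continuousOn, ?_, fun h => ?_⟩
  · exact tendsto_of_tendsto_of_tendsto_of_le_of_le tendsto_const_nhds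
      tendsto_eLpNorm_diagonalExpSemigroup_single (fun _ => zero_le)
      fun _ => eLpNorm_mono_measure _ (Measure.restrict_mono Ioc_subset_Ioi_self le_rfl)
  · simpa [lp.norm_single] using h.norm
end

section
/- With the delay-type semigroup e^{tA*} on H = ℝⁿ × L²([−d,0];ℝⁿ) given by e^{tA*}(z₀,z₁) = (e^{t a₀*} z₀, e^{(ξ+t)a₀*} z₀ 1_{[−t,0]}(ξ) + z₁(ξ+t) 1_{[−d,−t)}(ξ)), for xₙ = (0, aₙ) with aₙ(ξ) = n^α 1_{[−d,−d+1/n]}(ξ) and T ≥ d, one has ∫₀^T |e^{tA*} xₙ|²_H dt = (1/2) n^{2α−2}. -/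
open MeasureTheory Set

/-! For `t ≥ 0` the bump `aₙ(· + t)` cut off to `[-d, -t)` is a window of height `n^α` and length
`(1/n - t)₊` (here `1/n ≤ d` matters), so the inner integral is the ramp `n^{2α} (1/n - t)₊`, whose
integral over `(0, T] ⊇ (0, 1/n]` is `n^{2α} / (2 n²)`. -/

theorem sq_indicator_comp_add_indicator_const {α M : Type*} [Add α] [MonoidWithZero M]
    (A B : Set α) (t : α) (c : M) (x : α) :
    (A.indicator (fun x => B.indicator (fun _ => c) (x + t)) x) ^ 2
      = (A ∩ (· + t) ⁻¹' B).indicator (fun _ => c ^ 2) x := by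
  by_cases hA : x ∈ A <;> by_cases hB : x + t ∈ B <;> simp [hA, hB]

theorem volume_Ioc_inter_Ico_inter_preimage_add_Icc {d h t : ℝ} (ht : 0 ≤ t) (hhd : h ≤ d) :
    volume (Ioc (-d) 0 ∩ (Ico (-d) (-t) ∩ (· + t) ⁻¹' Icc (-d) (-d + h)))
      = ENNReal.ofReal (h - t) := by
  have hlen : -d + h - t - -d = h - t := by ring
  apply le_antisymm
  · calc _ ≤ volume (Ioc (-d) (-d + h - t)) := by
          refine measure_mono fun ξ ⟨hξ, _, hshift⟩ => ⟨hξ.1, ?_⟩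
          linarith [hshift.2]
      _ = _ := by rw [Real.volume_Ioc, hlen]
  · calc ENNReal.ofReal (h - t) = volume (Ioo (-d) (-d + h - t)) := by rw [Real.volume_Ioo, hlen]
      _ ≤ _ := by
          refine measure_mono fun ξ ⟨hl, hr⟩ =>
            ⟨⟨hl, by linarith⟩, ⟨hl.le, by linarith⟩, ?_, ?_⟩ <;> linarith

theorem setIntegral_sq_shifted_bump {d h t : ℝ} (c : ℝ) (ht : 0 ≤ t) (hhd : h ≤ d) :
    ∫ ξ in Ioc (-d) 0,
        (indicator (Ico (-d) (-t))
          (fun ξ => indicator (Icc (-d) (-d + h)) (fun _ => c) (ξ + t)) ξ) ^ 2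
      = c ^ 2 * max (h - t) 0 := by
  simp_rw [sq_indicator_comp_add_indicator_const]
  have hmeas : MeasurableSet (Ico (-d) (-t) ∩ (· + t) ⁻¹' Icc (-d) (-d + h)) :=
    measurableSet_Ico.inter (measurableSet_Icc.preimage (measurable_add_const t))
  rw [setIntegral_indicator hmeas, setIntegral_const, measureReal_def,
    volume_Ioc_inter_Ico_inter_preimage_add_Icc ht hhd,
    ENNReal.toReal_ofReal', smul_eq_mul, mul_comm]

theorem setIntegral_Ioc_max_sub_zero {h T : ℝ} (hh : 0 ≤ h) (hhT : h ≤ T) :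
    ∫ t in Ioc 0 T, max (h - t) 0 = h ^ 2 / 2 := by
  have hcont : Continuous fun t : ℝ => max (h - t) 0 := by fun_prop
  rw [← intervalIntegral.integral_of_le (hh.trans hhT),
    ← intervalIntegral.integral_add_adjacent_intervals (b := h) (hcont.intervalIntegrable _ _)
      (hcont.intervalIntegrable _ _)]
  have hleft : ∫ t in (0)..h, max (h - t) 0 = ∫ t in (0)..h, (h - t) :=
    intervalIntegral.integral_congr fun t ht => by
      rw [uIcc_of_le hh] at ht; exact max_eq_left (by linarith [ht.2])
  have hright : ∫ t in h..T, max (h - t) 0 = ∫ t in h..T, (0 : ℝ) :=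
    intervalIntegral.integral_congr fun t ht => by
      rw [uIcc_of_le hhT] at ht; exact max_eq_right (by linarith [ht.1])
  rw [hleft, hright, intervalIntegral.integral_zero, add_zero,
    intervalIntegral.integral_sub intervalIntegrable_const intervalIntegral.intervalIntegrable_id,
    intervalIntegral.integral_const, integral_id]
  simp only [sub_zero, smul_eq_mul]
  ring

theorem stmt6_general (d T α : ℝ) (n : ℕ) (hT : d ≤ T) (hn : 1 ≤ n)
    (hnd : 1 / (n : ℝ) ≤ d) :
    (∫ t in Set.Ioc (0 : ℝ) T,
      ∫ ξ in Set.Ioc (-d) (0 : ℝ),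
        (Set.indicator (Set.Ico (-d) (-t))
          (fun ξ => Set.indicator (Set.Icc (-d) (-d + 1 / (n : ℝ)))
            (fun _ => (n : ℝ) ^ α) (ξ + t)) ξ) ^ 2)
      = (1 / 2) * (n : ℝ) ^ (2 * α - 2) := by
  have hn0 : (0 : ℝ) < n := by exact_mod_cast hn
  rw [setIntegral_congr_fun measurableSet_Ioc
      fun t ht => setIntegral_sq_shifted_bump _ ht.1.le hnd,
    integral_const_mul, setIntegral_Ioc_max_sub_zero (by positivity) (hnd.trans hT),
    Real.rpow_sub hn0, Real.rpow_two, ← Real.rpow_mul_natCast hn0.le, Nat.cast_ofNat, mul_comm α]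
  field_simp

/-- For the delay-type adjoint semigroup on `ℝⁿ × L²([−d,0];ℝⁿ)` (here in
its explicit form, with first component `0` since `x₀ = 0`; taking `a₀ = 0` as the context
allows), with `xₙ = (0, aₙ)`, `aₙ = n^α 1_{[−d,−d+1/n]}`, and `T ≥ d`, the squared `L²(0,T;H)`
norm of the orbit is
`∫₀^T |e^{tA*}xₙ|²_H dt = ∫₀^T ∫_{−d}^0 (1_{[−d,−t)}(ξ) aₙ(ξ+t))² dξ dt = (1/2) n^{2α−2}`. -/
theorem stmt6 (d T α : ℝ) (n : ℕ) (hd : 0 < d) (hT : d ≤ T) (hn : 1 ≤ n)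
    (hnd : 1 / (n : ℝ) ≤ d) :
    (∫ t in Set.Ioc (0 : ℝ) T,
      ∫ ξ in Set.Ioc (-d) (0 : ℝ),
        (Set.indicator (Set.Ico (-d) (-t))
          (fun ξ => Set.indicator (Set.Icc (-d) (-d + 1 / (n : ℝ)))
            (fun _ => (n : ℝ) ^ α) (ξ + t)) ξ) ^ 2)
      = (1 / 2) * (n : ℝ) ^ (2 * α - 2) :=
  stmt6_general d T α n hT hn hnd
end

section
/- For the delay semigroup on H = ℝⁿ × L²([−d,0];ℝⁿ) generated by A₁ with A₁(x₀,x₁) = (a₀x₀ + x₁(0), −x₁′) on D(A₁) = {x ∈ H : x₁ ∈ W^{1,2}, x₁(−d) = 0}, the semigroup is given explicitly by e^{tA₁}(x₀,x₁) = (e^{ta₀}x₀ + ∫_{−d}^0 1_{[−t,0]}(s) e^{(t+s)a₀} x₁(s) ds, x₁(·−t) 1_{[−d+t,0]}(·)), and the adjoint semigroup by e^{tA₁*}(z₀,z₁) = (e^{ta₀*} z₀, e^{(·+t)a₀*} z₀ 1_{[−t,0]}(·) + z₁(·+t) 1_{[−d,−t)}(·)). In particular, these two families of operators are adjoint to each other: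 ⟨e^{tA₁}x, z⟩_H = ⟨x, e^{tA₁*}z⟩_H for all x, z ∈ H and t ∈ [0,d]. -/
open MeasureTheory Set NormedSpace
open scoped RealInnerProductSpace

/-!
Pair the two components separately. In `ℝⁿ`, `e^{ta₀*} = (e^{ta₀})*`. The history integral
`∫ 1_{[-t,0]}(s) e^{(t+s)a₀} x₁(s) ds` is Bochner integrable (a continuous operator family applied
to an `L¹` function on a bounded interval), so its pairing with `z₀` can be taken under the
integral, which produces the `e^{(·+t)a₀*} z₀` term. The delay terms match under the substitution
`ξ ↦ ξ + t`, which maps `(-d, -t]` onto `(-d+t, 0]`; the indicators differ from these intervals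
only at endpoints, a null set.
-/

section InnerProduct

variable {𝕜 F α : Type*} [RCLike 𝕜] [NormedAddCommGroup F] [InnerProductSpace 𝕜 F]

theorem inner_indicator_left (s : Set α) (f g : α → F) (a : α) :
    inner 𝕜 (s.indicator f a) (g a) = s.indicator (fun a => inner 𝕜 (f a) (g a)) a := by
  by_cases h : a ∈ s <;> simp [h]

theorem inner_indicator_right (s : Set α) (f g : α → F) (a : α) :
    inner 𝕜 (f a) (s.indicator g a) = s.indicator (fun a => inner 𝕜 (f a) (g a)) a := by
  by_cases h : a ∈ s <;> simp [h]

theorem MeasureTheory.MemLp.integrable_inner {m : MeasurableSpace α} {μ : Measure α}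
    {f g : α → F} (hf : MemLp f 2 μ) (hg : MemLp g 2 μ) :
    Integrable (fun a => inner 𝕜 (f a) (g a)) μ := by
  refine (L2.integrable_inner (𝕜 := 𝕜) (hf.toLp f) (hg.toLp g)).congr ?_
  filter_upwards [hf.coeFn_toLp, hg.coeFn_toLp] with a hfa hga
  rw [hfa, hga]

end InnerProduct

theorem ContinuousLinearMap.inner_exp_smul_apply {F : Type*} [NormedAddCommGroup F]
    [InnerProductSpace ℝ F] [CompleteSpace F] (a : F →L[ℝ] F) (r : ℝ) (x z : F) :
    ⟪exp (r • a) x, z⟫ = ⟪x, exp (r • adjoint a) z⟫ := by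
  rw [← adjoint_inner_right, ← star_eq_adjoint, star_exp, star_smul, star_trivial,
    star_eq_adjoint]

theorem MeasureTheory.IntegrableOn.continuousOn_apply_of_subset {𝕜 X E F : Type*}
    [NontriviallyNormedField 𝕜] [NormedAddCommGroup E] [NormedSpace 𝕜 E]
    [NormedAddCommGroup F] [NormedSpace 𝕜 F] [TopologicalSpace X] [MeasurableSpace X]
    [OpensMeasurableSpace X] [SecondCountableTopologyEither X (E →L[𝕜] F)]
    {μ : Measure X} {A K : Set X} {L : X → E →L[𝕜] F} {f : X → E}
    (hL : ContinuousOn L K) (hf : IntegrableOn f A μ) (hK : IsCompact K) (hA : MeasurableSet A)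
    (hAK : A ⊆ K) :
    IntegrableOn (fun x => L x (f x)) A μ := by
  obtain ⟨C, hC⟩ := hK.exists_bound_of_continuousOn hL
  refine (hf.norm.const_mul C).mono'
    ((ContinuousLinearMap.apply 𝕜 F).aestronglyMeasurable_comp₂ hf.1
      ((hL.mono hAK).aestronglyMeasurable hA)) ?_
  filter_upwards [ae_restrict_mem hA] with x hx
  exact (L x).le_opNorm (f x) |>.trans
    (mul_le_mul_of_nonneg_right (hC x (hAK hx)) (norm_nonneg _))

theorem MeasureTheory.MemLp.comp_add_right_restrict {G E : Type*} [MeasurableSpace G] [Add G]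
    [MeasurableAdd G] [NormedAddCommGroup E] {μ : Measure G} [μ.IsAddRightInvariant]
    {p : ENNReal} {s : Set G} {f : G → E} (hf : MemLp f p (μ.restrict s)) (hs : MeasurableSet s)
    (g : G) :
    MemLp (fun x => f (x + g)) p (μ.restrict ((· + g) ⁻¹' s)) :=
  hf.comp_measurePreserving ((measurePreserving_add_right μ g).restrict_preimage hs)

theorem MeasureTheory.MemLp.indicator_comp_add_right {G E : Type*} [MeasurableSpace G] [Add G]
    [MeasurableAdd G] [NormedAddCommGroup E] {μ : Measure G} [μ.IsAddRightInvariant]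
    {p : ENNReal} {s u : Set G} {f : G → E} (hf : MemLp f p (μ.restrict s)) (hs : MeasurableSet s)
    (hu : MeasurableSet u) {g : G} (hus : u ∩ s ⊆ (· + g) ⁻¹' s) :
    MemLp (u.indicator fun x => f (x + g)) p (μ.restrict s) := by
  rw [memLp_indicator_iff_restrict hu, Measure.restrict_restrict hu]
  exact (hf.comp_add_right_restrict hs g).mono_measure (Measure.restrict_mono hus le_rfl)

variable {F : Type*} [NormedAddCommGroup F] [InnerProductSpace ℝ F] in
theorem setIntegral_Ioc_inner_indicator_comp_sub {d t : ℝ} (ht : 0 ≤ t) (x z : ℝ → F) :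
    ∫ ξ in Ioc (-d) 0, ⟪(Icc (-d + t) 0).indicator (fun ξ => x (ξ - t)) ξ, z ξ⟫ =
      ∫ ξ in Ioc (-d) 0, ⟪x ξ, (Ico (-d) (-t)).indicator (fun ξ => z (ξ + t)) ξ⟫ := by
  simp_rw [inner_indicator_left, inner_indicator_right]
  rw [setIntegral_indicator measurableSet_Icc, setIntegral_indicator measurableSet_Ico]
  calc ∫ ξ in Ioc (-d) 0 ∩ Icc (-d + t) 0, ⟪x (ξ - t), z ξ⟫
      = ∫ ξ in Ioc (-d + t) 0, ⟪x (ξ - t), z ξ⟫ := by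
        refine setIntegral_congr_set ?_
        rw [← inter_eq_right.2 (Ioc_subset_Ioc_left (by linarith : -d ≤ -d + t))]
        exact (ae_eq_refl _).inter Ioc_ae_eq_Icc.symm
    _ = ∫ ξ in Ioc (-d) (-t), ⟪x ξ, z (ξ + t)⟫ := by
        rw [← (measurePreserving_add_right volume t).setIntegral_preimage_emb
          (measurableEmbedding_addRight t)]
        simp
    _ = ∫ ξ in Ioc (-d) 0 ∩ Ico (-d) (-t), ⟪x ξ, z (ξ + t)⟫ := by
        refine setIntegral_congr_set ?_
        rw [← inter_eq_right.2 (Ioc_subset_Ioc_right (by linarith : -t ≤ 0))]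
        exact (ae_eq_refl _).inter Ico_ae_eq_Ioc.symm

theorem stmt15_general (n : ℕ) (d t : ℝ) (ht0 : 0 ≤ t)
    (a₀ : EuclideanSpace ℝ (Fin n) →L[ℝ] EuclideanSpace ℝ (Fin n))
    (x₀ z₀ : EuclideanSpace ℝ (Fin n))
    (x₁ z₁ : ℝ → EuclideanSpace ℝ (Fin n))
    (hx₁ : MeasureTheory.MemLp x₁ 2 ((volume : Measure ℝ).restrict (Set.Ioc (-d) 0)))
    (hz₁ : MeasureTheory.MemLp z₁ 2 ((volume : Measure ℝ).restrict (Set.Ioc (-d) 0))) :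
    ⟪(NormedSpace.exp (t • a₀)) x₀ +
        ∫ s in Set.Ioc (-d) (0 : ℝ),
          Set.indicator (Set.Icc (-t) 0)
            (fun s => (NormedSpace.exp ((t + s) • a₀)) (x₁ s)) s, z₀⟫ +
      (∫ ξ in Set.Ioc (-d) (0 : ℝ),
        ⟪Set.indicator (Set.Icc (-d + t) 0) (fun ξ => x₁ (ξ - t)) ξ, z₁ ξ⟫)
    =
    ⟪x₀, (NormedSpace.exp (t • ContinuousLinearMap.adjoint a₀)) z₀⟫ +
      ∫ ξ in Set.Ioc (-d) (0 : ℝ),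
        ⟪x₁ ξ,
          Set.indicator (Set.Icc (-t) 0)
            (fun ξ => (NormedSpace.exp ((ξ + t) • ContinuousLinearMap.adjoint a₀)) z₀) ξ +
          Set.indicator (Set.Ico (-d) (-t)) (fun ξ => z₁ (ξ + t)) ξ⟫ := by
  have hexp : Continuous (exp : (EuclideanSpace ℝ (Fin n) →L[ℝ] EuclideanSpace ℝ (Fin n)) → _) :=
    continuous_iff_continuousAt.2 fun a => (exp_analytic (𝕂 := ℝ) a).continuousAt
  have hhistory : Integrable ((Icc (-t) 0).indicator fun s => exp ((t + s) • a₀) (x₁ s))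
      (volume.restrict (Ioc (-d) 0)) :=
    (IntegrableOn.continuousOn_apply_of_subset
      (hexp.comp (by fun_prop)).continuousOn (hx₁.integrable one_le_two)
      isCompact_Icc measurableSet_Ioc Ioc_subset_Icc_self).indicator measurableSet_Icc
  have hpair : ∀ ξ, ⟪(Icc (-t) 0).indicator (fun s => exp ((t + s) • a₀) (x₁ s)) ξ, z₀⟫ =
      ⟪x₁ ξ, (Icc (-t) 0).indicator
        (fun ξ => exp ((ξ + t) • ContinuousLinearMap.adjoint a₀) z₀) ξ⟫ := fun ξ => by
    rw [inner_indicator_left (g := fun _ => z₀), inner_indicator_right (f := x₁)]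
    simp only [ContinuousLinearMap.inner_exp_smul_apply, add_comm t]
  have hhistory_inner : ⟪∫ s in Ioc (-d) 0, (Icc (-t) 0).indicator
        (fun s => exp ((t + s) • a₀) (x₁ s)) s, z₀⟫ =
      ∫ ξ in Ioc (-d) 0, ⟪x₁ ξ, (Icc (-t) 0).indicator
        (fun ξ => exp ((ξ + t) • ContinuousLinearMap.adjoint a₀) z₀) ξ⟫ := by
    rw [real_inner_comm, ← integral_inner hhistory]
    exact integral_congr_ae (ae_of_all _ fun ξ => (real_inner_comm _ _).trans (hpair ξ))
  have hdelay : Integrable (fun ξ => ⟪x₁ ξ, (Ico (-d) (-t)).indicator (fun ξ => z₁ (ξ + t)) ξ⟫)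
      (volume.restrict (Ioc (-d) 0)) := by
    refine hx₁.integrable_inner
      (hz₁.indicator_comp_add_right measurableSet_Ioc measurableSet_Ico ?_)
    rintro ξ ⟨⟨-, hξt⟩, hξd, -⟩
    show -d < ξ + t ∧ ξ + t ≤ 0
    constructor <;> linarith
  rw [inner_add_left, ContinuousLinearMap.inner_exp_smul_apply, hhistory_inner,
    setIntegral_Ioc_inner_indicator_comp_sub ht0, add_assoc,
    ← integral_add ((hhistory.inner_const z₀).congr (ae_of_all _ hpair)) hdelay]
  simp_rw [inner_add_right]

/-- For the delay semigroup on `H = ℝⁿ × L²([−d,0];ℝⁿ)` with the explicit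
formulas
`e^{tA₁}(x₀,x₁) = (e^{ta₀}x₀ + ∫_{−d}^0 1_{[−t,0]}(s) e^{(t+s)a₀} x₁(s) ds, x₁(·−t)1_{[−d+t,0]})`
and
`e^{tA₁*}(z₀,z₁) = (e^{ta₀*}z₀, e^{(·+t)a₀*}z₀ 1_{[−t,0]} + z₁(·+t)1_{[−d,−t)})`,
these families are adjoint to each other:
`⟨e^{tA₁}x, z⟩_H = ⟨x, e^{tA₁*}z⟩_H` for all `x, z ∈ H` and `t ∈ [0,d]`. -/
theorem stmt15 (n : ℕ) (d t : ℝ) (hd : 0 < d) (ht0 : 0 ≤ t) (htd : t ≤ d)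
    (a₀ : EuclideanSpace ℝ (Fin n) →L[ℝ] EuclideanSpace ℝ (Fin n))
    (x₀ z₀ : EuclideanSpace ℝ (Fin n))
    (x₁ z₁ : ℝ → EuclideanSpace ℝ (Fin n))
    (hx₁ : MeasureTheory.MemLp x₁ 2 ((volume : Measure ℝ).restrict (Set.Ioc (-d) 0)))
    (hz₁ : MeasureTheory.MemLp z₁ 2 ((volume : Measure ℝ).restrict (Set.Ioc (-d) 0))) :
    ⟪(NormedSpace.exp (t • a₀)) x₀ +
        ∫ s in Set.Ioc (-d) (0 : ℝ),
          Set.indicator (Set.Icc (-t) 0)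
            (fun s => (NormedSpace.exp ((t + s) • a₀)) (x₁ s)) s, z₀⟫ +
      (∫ ξ in Set.Ioc (-d) (0 : ℝ),
        ⟪Set.indicator (Set.Icc (-d + t) 0) (fun ξ => x₁ (ξ - t)) ξ, z₁ ξ⟫)
    =
    ⟪x₀, (NormedSpace.exp (t • ContinuousLinearMap.adjoint a₀)) z₀⟫ +
      ∫ ξ in Set.Ioc (-d) (0 : ℝ),
        ⟪x₁ ξ,
          Set.indicator (Set.Icc (-t) 0)
            (fun ξ => (NormedSpace.exp ((ξ + t) • ContinuousLinearMap.adjoint a₀)) z₀) ξ +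
          Set.indicator (Set.Ico (-d) (-t)) (fun ξ => z₁ (ξ + t)) ξ⟫ :=
  stmt15_general n d t ht0 a₀ x₀ z₀ x₁ z₁ hx₁ hz₁
end
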